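/- Let O be the set of 37 one-dimensional projection observables of Table I, with the 26 contexts of Table II. Then there is no partial function v : O → {0,1} that is admissible and has v(P_a) = 1 and v(P_b) = 0. -/
import Mathlib


noncomputable def va : Fin 3 → ℝ := ![(1 : ℝ), (0 : ℝ), (0 : ℝ)]
noncomputable def vb : Fin 3 → ℝ := ![(Real.sqrt 2 : ℝ), (1 : ℝ), (1 : ℝ)]
noncomputable def v1 : Fin 3 → ℝ := ![(0 : ℝ), (1 : ℝ), (1 : ℝ)]
noncomputable def v2 : Fin 3 → ℝ := ![(0 : ℝ), (1 : ℝ), (-1 : ℝ)]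
noncomputable def v3 : Fin 3 → ℝ := ![(Real.sqrt 2 : ℝ), (-1 : ℝ), (-1 : ℝ)]
noncomputable def v4 : Fin 3 → ℝ := ![(0 : ℝ), (0 : ℝ), (1 : ℝ)]
noncomputable def v5 : Fin 3 → ℝ := ![(0 : ℝ), (1 : ℝ), (0 : ℝ)]
noncomputable def v6 : Fin 3 → ℝ := ![(Real.sqrt 2 : ℝ), (1 : ℝ), (-3 : ℝ)]
noncomputable def v7 : Fin 3 → ℝ := ![(1 : ℝ), (-Real.sqrt 2 : ℝ), (0 : ℝ)]
noncomputable def v8 : Fin 3 → ℝ := ![(Real.sqrt 2 : ℝ), (-3 : ℝ), (1 : ℝ)]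
noncomputable def v9 : Fin 3 → ℝ := ![(1 : ℝ), (0 : ℝ), (-Real.sqrt 2 : ℝ)]
noncomputable def v10 : Fin 3 → ℝ := ![(Real.sqrt 2 : ℝ), (1 : ℝ), (0 : ℝ)]
noncomputable def v11 : Fin 3 → ℝ := ![(Real.sqrt 2 : ℝ), (0 : ℝ), (1 : ℝ)]
noncomputable def v12 : Fin 3 → ℝ := ![(Real.sqrt 2 : ℝ), (-2 : ℝ), (-3 : ℝ)]
noncomputable def v13 : Fin 3 → ℝ := ![(1 : ℝ), (-Real.sqrt 2 : ℝ), (Real.sqrt 2 : ℝ)]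
noncomputable def v14 : Fin 3 → ℝ := ![(Real.sqrt 2 : ℝ), (-3 : ℝ), (-2 : ℝ)]
noncomputable def v15 : Fin 3 → ℝ := ![(1 : ℝ), (Real.sqrt 2 : ℝ), (-Real.sqrt 2 : ℝ)]
noncomputable def v16 : Fin 3 → ℝ := ![(Real.sqrt 8 : ℝ), (1 : ℝ), (-1 : ℝ)]
noncomputable def v17 : Fin 3 → ℝ := ![(Real.sqrt 8 : ℝ), (-1 : ℝ), (1 : ℝ)]
noncomputable def v18 : Fin 3 → ℝ := ![(Real.sqrt 2 : ℝ), (-7 : ℝ), (-3 : ℝ)]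
noncomputable def v19 : Fin 3 → ℝ := ![(Real.sqrt 2 : ℝ), (-1 : ℝ), (3 : ℝ)]
noncomputable def v20 : Fin 3 → ℝ := ![(Real.sqrt 2 : ℝ), (-3 : ℝ), (-7 : ℝ)]
noncomputable def v21 : Fin 3 → ℝ := ![(Real.sqrt 2 : ℝ), (3 : ℝ), (-1 : ℝ)]
noncomputable def v22 : Fin 3 → ℝ := ![(1 : ℝ), (Real.sqrt 2 : ℝ), (0 : ℝ)]
noncomputable def v23 : Fin 3 → ℝ := ![(1 : ℝ), (0 : ℝ), (Real.sqrt 2 : ℝ)]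
noncomputable def v24 : Fin 3 → ℝ := ![(Real.sqrt 2 : ℝ), (-1 : ℝ), (-3 : ℝ)]
noncomputable def v25 : Fin 3 → ℝ := ![(Real.sqrt 2 : ℝ), (-1 : ℝ), (1 : ℝ)]
noncomputable def v26 : Fin 3 → ℝ := ![(Real.sqrt 2 : ℝ), (-3 : ℝ), (-1 : ℝ)]
noncomputable def v27 : Fin 3 → ℝ := ![(Real.sqrt 2 : ℝ), (1 : ℝ), (-1 : ℝ)]
noncomputable def v28 : Fin 3 → ℝ := ![(Real.sqrt 2 : ℝ), (-1 : ℝ), (0 : ℝ)]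
noncomputable def v29 : Fin 3 → ℝ := ![(Real.sqrt 2 : ℝ), (0 : ℝ), (-1 : ℝ)]
noncomputable def v30 : Fin 3 → ℝ := ![(Real.sqrt 2 : ℝ), (2 : ℝ), (3 : ℝ)]
noncomputable def v31 : Fin 3 → ℝ := ![(Real.sqrt 2 : ℝ), (3 : ℝ), (2 : ℝ)]
noncomputable def v32 : Fin 3 → ℝ := ![(Real.sqrt 2 : ℝ), (3 : ℝ), (7 : ℝ)]
noncomputable def v33 : Fin 3 → ℝ := ![(Real.sqrt 2 : ℝ), (7 : ℝ), (3 : ℝ)]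
noncomputable def v34 : Fin 3 → ℝ := ![(Real.sqrt 2 : ℝ), (1 : ℝ), (3 : ℝ)]
noncomputable def v35 : Fin 3 → ℝ := ![(Real.sqrt 2 : ℝ), (3 : ℝ), (1 : ℝ)]

/-- Admissibility rules (a) and (b) for one element of a context relative to the other two. -/
def adm3 (v : (Fin 3 → ℝ) → Option Bool) (p q r : Fin 3 → ℝ) : Prop :=
  (v p = some true → v q = some false ∧ v r = some false) ∧
  ((v q = some false ∧ v r = some false) → v p = some true)

/-- A partial value assignment on the 37 observables of Table I is admissible if it satisfies
rules (a) and (b) in each of the 26 contexts of Table II. -/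
def AdmissibleTable (v : (Fin 3 → ℝ) → Option Bool) : Prop :=
  (adm3 v va v1 v2 ∧ adm3 v v1 v2 va ∧ adm3 v v2 va v1) ∧
  (adm3 v va v4 v5 ∧ adm3 v v4 v5 va ∧ adm3 v v5 va v4) ∧
  (adm3 v vb v2 v3 ∧ adm3 v v2 v3 vb ∧ adm3 v v3 vb v2) ∧
  (adm3 v vb v6 v7 ∧ adm3 v v6 v7 vb ∧ adm3 v v7 vb v6) ∧
  (adm3 v vb v8 v9 ∧ adm3 v v8 v9 vb ∧ adm3 v v9 vb v8) ∧
  (adm3 v v4 v7 v10 ∧ adm3 v v7 v10 v4 ∧ adm3 v v10 v4 v7) ∧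
  (adm3 v v5 v9 v11 ∧ adm3 v v9 v11 v5 ∧ adm3 v v11 v5 v9) ∧
  (adm3 v v10 v12 v13 ∧ adm3 v v12 v13 v10 ∧ adm3 v v13 v10 v12) ∧
  (adm3 v v11 v14 v15 ∧ adm3 v v14 v15 v11 ∧ adm3 v v15 v11 v14) ∧
  (adm3 v v1 v13 v16 ∧ adm3 v v13 v16 v1 ∧ adm3 v v16 v1 v13) ∧
  (adm3 v v1 v15 v17 ∧ adm3 v v15 v17 v1 ∧ adm3 v v17 v1 v15) ∧
  (adm3 v v16 v18 v19 ∧ adm3 v v18 v19 v16 ∧ adm3 v v19 v16 v18) ∧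
  (adm3 v v17 v20 v21 ∧ adm3 v v20 v21 v17 ∧ adm3 v v21 v17 v20) ∧
  (adm3 v v3 v19 v22 ∧ adm3 v v19 v22 v3 ∧ adm3 v v22 v3 v19) ∧
  (adm3 v v3 v21 v23 ∧ adm3 v v21 v23 v3 ∧ adm3 v v23 v3 v21) ∧
  (adm3 v v22 v24 v25 ∧ adm3 v v24 v25 v22 ∧ adm3 v v25 v22 v24) ∧
  (adm3 v v23 v26 v27 ∧ adm3 v v26 v27 v23 ∧ adm3 v v27 v23 v26) ∧
  (adm3 v v4 v22 v28 ∧ adm3 v v22 v28 v4 ∧ adm3 v v28 v4 v22) ∧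
  (adm3 v v5 v23 v29 ∧ adm3 v v23 v29 v5 ∧ adm3 v v29 v5 v23) ∧
  (adm3 v v15 v28 v30 ∧ adm3 v v28 v30 v15 ∧ adm3 v v30 v15 v28) ∧
  (adm3 v v13 v29 v31 ∧ adm3 v v29 v31 v13 ∧ adm3 v v31 v13 v29) ∧
  (adm3 v v8 v16 v32 ∧ adm3 v v16 v32 v8 ∧ adm3 v v32 v8 v16) ∧
  (adm3 v v6 v17 v33 ∧ adm3 v v17 v33 v6 ∧ adm3 v v33 v6 v17) ∧
  (adm3 v v7 v27 v34 ∧ adm3 v v27 v34 v7 ∧ adm3 v v34 v7 v27) ∧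
  (adm3 v v9 v25 v35 ∧ adm3 v v25 v35 v9 ∧ adm3 v v35 v9 v25) ∧
  (adm3 v v1 v25 v27 ∧ adm3 v v25 v27 v1 ∧ adm3 v v27 v1 v25)

theorem no_admissible_with_va_one_vb_zero :
    ¬ ∃ v : (Fin 3 → ℝ) → Option Bool,
      AdmissibleTable v ∧ v va = some true ∧ v vb = some false := by
  rintro ⟨v, ⟨C1, C2, C3, C4, C5, C6, C7, C8, C9, C10, C11, C12, C13, C14, C15,
    C16, C17, C18, C19, C20, C21, C22, C23, C24, C25, C26⟩, ha, hb⟩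
  obtain ⟨h1, h2⟩ := C1.1.1 ha
  obtain ⟨h4, h5⟩ := C2.1.1 ha
  have h3 : v v3 = some true := C3.2.2.2 ⟨hb, h2⟩
  obtain ⟨h19, h22⟩ := C14.1.1 h3
  obtain ⟨h21, h23⟩ := C15.1.1 h3
  have h28 : v v28 = some true := C18.2.2.2 ⟨h4, h22⟩
  have h29 : v v29 = some true := C19.2.2.2 ⟨h5, h23⟩
  obtain ⟨h30, h15⟩ := C20.2.1.1 h28
  obtain ⟨h31, h13⟩ := C21.2.1.1 h29
  have h16 : v v16 = some true := C10.2.2.2 ⟨h1, h13⟩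
  have h17 : v v17 = some true := C11.2.2.2 ⟨h1, h15⟩
  obtain ⟨h32, h8⟩ := C22.2.1.1 h16
  obtain ⟨h33, h6⟩ := C23.2.1.1 h17
  have h9 : v v9 = some true := C5.2.2.2 ⟨hb, h8⟩
  have h7 : v v7 = some true := C4.2.2.2 ⟨hb, h6⟩
  obtain ⟨h25, h35⟩ := C25.1.1 h9
  obtain ⟨h27, h34⟩ := C24.1.1 h7
  have h1' : v v1 = some true := C26.1.2 ⟨h25, h27⟩
  rw [h1'] at h1
  simp at h1
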